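/- Let H ∈ (0,1), let K : (0,∞) → ℝ be locally integrable, and suppose there exists d_Z ≠ 0 such that K(t) · t^{1/2−H} → d_Z as t → 0⁺. Then D(τ) = ∫₀^τ (τ−u) K(u) du satisfies D(τ) · τ^{−H−3/2} → d_Z Γ(H+1/2) / Γ(H+5/2) as τ → 0⁺; equivalently D(τ) = d_Z ( Γ(H+1/2)/Γ(H+5/2) ) τ^{H+3/2} (1+o(1)) as τ → 0⁺. -/

import Mathlib

open MeasureTheory Real Set Filter Topology

/-!
Write `a = H - 1/2`, so that `K u = d_Z u^a (1 + o(1))` as `u → 0⁺`. Since the weight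
`(τ - u) u^a` is nonnegative, the error term in `∫₀^τ (τ - u) K u du` is at most `ε` times
`∫₀^τ (τ - u) u^a du = τ^(a+2) / ((a+1)(a+2))`, and `1 / ((a+1)(a+2)) = Γ(a+1) / Γ(a+3)`.
-/

lemma Real.Gamma_div_Gamma_add_two {s : ℝ} (hs : 0 < s) :
    Gamma s / Gamma (s + 2) = 1 / (s * (s + 1)) := by
  have hΓ : Gamma (s + 2) = (s + 1) * (s * Gamma s) := by
    rw [show s + 2 = s + 1 + 1 by ring, Gamma_add_one (by linarith), Gamma_add_one hs.ne']
  rw [hΓ]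
  field_simp [(Gamma_pos_of_pos hs).ne']

lemma integral_sub_mul_rpow {a τ : ℝ} (ha : -1 < a) (hτ : 0 ≤ τ) :
    ∫ u in (0:ℝ)..τ, (τ - u) * u ^ a = τ ^ (a + 2) / ((a + 1) * (a + 2)) := by
  have ha1 : a + 1 ≠ 0 := by linarith
  have ha2 : a + 1 + 1 ≠ 0 := by linarith
  have hsplit : EqOn (fun u : ℝ => (τ - u) * u ^ a) (fun u => τ * u ^ a - u ^ (a + 1))
      (uIcc 0 τ) := by
    intro u hu
    simp only [rpow_add_one' (uIcc_of_le hτ ▸ hu).1 ha1]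
    ring
  rw [intervalIntegral.integral_congr hsplit, intervalIntegral.integral_sub
      ((intervalIntegral.intervalIntegrable_rpow' ha).const_mul τ)
      (intervalIntegral.intervalIntegrable_rpow' (by linarith)),
    intervalIntegral.integral_const_mul, integral_rpow (Or.inl ha),
    integral_rpow (Or.inl (by linarith)), zero_rpow ha1, zero_rpow ha2,
    show a + 2 = a + 1 + 1 by ring, rpow_add_one' hτ ha2]
  field_simp
  ring

lemma abs_setIntegral_mul_sub_le {α : Type*} [MeasurableSpace α] {μ : Measure α} {s : Set α}
    (hs : MeasurableSet s) {w f : α → ℝ} {d ε : ℝ} (hw : IntegrableOn w s μ)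
    (hwf : IntegrableOn (fun x => w x * f x) s μ) (hw0 : ∀ x ∈ s, 0 ≤ w x)
    (hf : ∀ x ∈ s, |f x - d| ≤ ε) :
    |∫ x in s, w x * f x ∂μ - d * ∫ x in s, w x ∂μ| ≤ ε * ∫ x in s, w x ∂μ := by
  rw [← integral_const_mul, ← integral_const_mul, ← integral_sub hwf (hw.const_mul d),
    ← Real.norm_eq_abs]
  refine norm_integral_le_of_norm_le (hw.const_mul ε) (ae_restrict_of_forall_mem hs ?_)
  intro x hx
  rw [show w x * f x - d * w x = w x * (f x - d) by ring, norm_mul, Real.norm_eq_abs,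
    abs_of_nonneg (hw0 x hx), mul_comm ε]
  exact mul_le_mul_of_nonneg_left (hf x hx) (hw0 x hx)

lemma abs_integral_sub_mul_sub_le {a d ε τ : ℝ} (ha : -1 < a) (hτ : 0 < τ) {K : ℝ → ℝ}
    (hK : IntegrableOn K (Ioc 0 τ)) (hKd : ∀ u ∈ Ioc 0 τ, |K u * u ^ (-a) - d| ≤ ε) :
    |(∫ u in (0:ℝ)..τ, (τ - u) * K u) - d * (τ ^ (a + 2) / ((a + 1) * (a + 2)))|
      ≤ ε * (τ ^ (a + 2) / ((a + 1) * (a + 2))) := by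
  have hw : IntervalIntegrable (fun u => (τ - u) * u ^ a) volume 0 τ :=
    (intervalIntegral.intervalIntegrable_rpow' ha).continuousOn_mul (by fun_prop)
  have hwK : IntervalIntegrable (fun u => (τ - u) * K u) volume 0 τ :=
    ((intervalIntegrable_iff_integrableOn_Ioc_of_le hτ.le).2 hK).continuousOn_mul (by fun_prop)
  have hsplit : EqOn (fun u => (τ - u) * K u) (fun u => (τ - u) * u ^ a * (K u * u ^ (-a)))
      (Ioc 0 τ) := by
    intro u hu
    have hua : u ^ a ≠ 0 := (rpow_pos_of_pos hu.1 a).ne'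
    simp only [rpow_neg hu.1.le]
    field_simp
  rw [intervalIntegrable_iff_integrableOn_Ioc_of_le hτ.le] at hw hwK
  rw [← integral_sub_mul_rpow ha hτ.le, intervalIntegral.integral_of_le hτ.le,
    intervalIntegral.integral_of_le hτ.le, setIntegral_congr_fun measurableSet_Ioc hsplit]
  refine abs_setIntegral_mul_sub_le measurableSet_Ioc hw
    (hwK.congr_fun hsplit measurableSet_Ioc) (fun u hu => ?_) hKd
  exact mul_nonneg (sub_nonneg.2 hu.2) (rpow_nonneg hu.1.le a)

theorem tendsto_integral_sub_mul_mul_rpow {a d : ℝ} (ha : -1 < a) {K : ℝ → ℝ}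
    (hK : ∀ T, 0 < T → IntegrableOn K (Ioc 0 T))
    (hKd : Tendsto (fun t => K t * t ^ (-a)) (𝓝[>] 0) (𝓝 d)) :
    Tendsto (fun τ => (∫ u in (0:ℝ)..τ, (τ - u) * K u) * τ ^ (-a - 2)) (𝓝[>] 0)
      (𝓝 (d / ((a + 1) * (a + 2)))) := by
  set c := (a + 1) * (a + 2)
  have hc : 0 < c := mul_pos (by linarith) (by linarith)
  rw [(nhdsGT_basis 0).tendsto_iff Metric.nhds_basis_closedBall] at hKd ⊢
  intro ε hε
  obtain ⟨δ, hδ, hKδ⟩ := hKd (ε * c) (by positivity)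
  refine ⟨δ, hδ, fun τ hτ => ?_⟩
  have hbound := abs_integral_sub_mul_sub_le ha hτ.1 (hK τ hτ.1)
    fun u hu => hKδ u ⟨hu.1, hu.2.trans_lt hτ.2⟩
  have hpos : 0 < τ ^ (-a - 2) := rpow_pos_of_pos hτ.1 _
  have hscale : τ ^ (a + 2) * τ ^ (-a - 2) = 1 := by
    rw [← rpow_add hτ.1, show a + 2 + (-a - 2) = 0 by ring, rpow_zero]
  rw [Metric.mem_closedBall, Real.dist_eq]
  set D := ∫ u in (0:ℝ)..τ, (τ - u) * K u
  calc |D * τ ^ (-a - 2) - d / c| = |D - d * (τ ^ (a + 2) / c)| * τ ^ (-a - 2) := by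
        rw [← abs_of_pos hpos, ← abs_mul, abs_of_pos hpos, sub_mul]
        congr 2
        linear_combination -(d / c) * hscale
    _ ≤ ε * c * (τ ^ (a + 2) / c) * τ ^ (-a - 2) := by gcongr
    _ = ε := by
        field_simp
        rw [hscale]

theorem general_kernel_D_short_time_general (H : ℝ) (hH : H ∈ Set.Ioo (0:ℝ) 1)
    (K : ℝ → ℝ) (hK1 : ∀ T : ℝ, 0 < T → IntegrableOn K (Set.Ioc 0 T))
    (dZ : ℝ)
    (hKzero : Tendsto (fun t : ℝ => K t * t ^ (1/2 - H)) (𝓝[>] 0) (𝓝 dZ)) :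
    Tendsto (fun τ : ℝ => (∫ u in (0:ℝ)..τ, (τ - u) * K u) * τ ^ (-H - 3/2))
      (𝓝[>] 0)
      (𝓝 (dZ * Real.Gamma (H + 1/2) / Real.Gamma (H + 5/2))) := by
  have hlim := tendsto_integral_sub_mul_mul_rpow (a := H - 1/2) (by linarith [hH.1]) hK1
    (by simpa only [neg_sub] using hKzero)
  rw [mul_div_assoc, show H + 5/2 = H + 1/2 + 2 by ring,
    Gamma_div_Gamma_add_two (by linarith [hH.1]), ← div_eq_mul_one_div]
  convert hlim using 4 <;> ring

theorem general_kernel_D_short_time (H : ℝ) (hH : H ∈ Set.Ioo (0:ℝ) 1)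
    (K : ℝ → ℝ) (hK1 : ∀ T : ℝ, 0 < T → IntegrableOn K (Set.Ioc 0 T))
    (dZ : ℝ) (hdZ : dZ ≠ 0)
    (hKzero : Tendsto (fun t : ℝ => K t * t ^ (1/2 - H)) (𝓝[>] 0) (𝓝 dZ)) :
    Tendsto (fun τ : ℝ => (∫ u in (0:ℝ)..τ, (τ - u) * K u) * τ ^ (-H - 3/2))
      (𝓝[>] 0)
      (𝓝 (dZ * Real.Gamma (H + 1/2) / Real.Gamma (H + 5/2))) :=
  general_kernel_D_short_time_general H hH K hK1 dZ hKzero
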